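/- arXiv:1608.00860 — 4 statements merged into one kernel-verified Lean document; each statement's English description precedes it below -/
import Mathlib

section
/- Let k be a positive-definite kernel on a set 𝒳 and let X̄ = (x̄₁,…,x̄ᵣ) be a finite tuple of pairwise distinct points of 𝒳 such that the matrix K(X̄,X̄) is invertible. Then the Schur-complement function k_Schur(x,x') = k(x,x') − k(x,X̄)·K(X̄,X̄)⁻¹·k(X̄,x') is a positive-definite kernel on 𝒳. -/
open scoped BigOperators

/-- A symmetric function `k` is a positive-definite kernel if for every finite list of
pairwise distinct points `x₁,…,xₘ` and all real coefficients `α₁,…,αₘ`,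
`∑ᵢⱼ αᵢ αⱼ k(xᵢ,xⱼ) ≥ 0`. -/
def PosDefKernel {𝒳 : Type*} (k : 𝒳 → 𝒳 → ℝ) : Prop :=
  ∀ (m : ℕ) (x : Fin m → 𝒳), Function.Injective x →
    ∀ α : Fin m → ℝ, 0 ≤ ∑ i, ∑ j, α i * α j * k (x i) (x j)

/-! On any finite family `x`, the kernel matrix of `k` on the concatenation `(X̄, x)` is positive
semidefinite, with block form `[[K, B], [Bᵀ, D]]` where `K = K(X̄,X̄)`. Being positive semidefinite
and invertible, `K` is positive definite, so the Schur complement criterion makes `D - Bᵀ K⁻¹ B`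
positive semidefinite; and `D - Bᵀ K⁻¹ B` is the kernel matrix of `k_Schur` on `x`. -/

open Matrix

section KernelMatrix

variable {𝒳 ι κ : Type*} (k : 𝒳 → 𝒳 → ℝ)

def kernelMatrix (x : ι → 𝒳) (y : κ → 𝒳) : Matrix ι κ ℝ :=
  Matrix.of fun i j => k (x i) (y j)

theorem conjTranspose_kernelMatrix (hsym : ∀ x y, k x y = k y x) (x : ι → 𝒳) (y : κ → 𝒳) :
    (kernelMatrix k x y)ᴴ = kernelMatrix k y x := by
  ext i j
  simp [kernelMatrix, hsym (x j)]

theorem kernelMatrix_sumElim (x : ι → 𝒳) (y : κ → 𝒳) :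
    kernelMatrix k (Sum.elim x y) (Sum.elim x y) =
      fromBlocks (kernelMatrix k x x) (kernelMatrix k x y)
        (kernelMatrix k y x) (kernelMatrix k y y) := by
  ext (i | i) (j | j) <;> rfl

theorem dotProduct_kernelMatrix_mulVec [Fintype ι] (x : ι → 𝒳) (α : ι → ℝ) :
    α ⬝ᵥ (kernelMatrix k x x *ᵥ α) = ∑ i, ∑ j, α i * α j * k (x i) (x j) := by
  simp only [dotProduct, mulVec, kernelMatrix, of_apply, Finset.mul_sum]
  exact Finset.sum_congr rfl fun i _ => Finset.sum_congr rfl fun j _ => by ring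

theorem kernelMatrix_sub_sum_sum {ρ : Type*} [Fintype ρ] (x : ι → 𝒳) (z : ρ → 𝒳)
    (A : Matrix ρ ρ ℝ) :
    kernelMatrix (fun y y' => k y y' - ∑ a, ∑ b, k y (z a) * A a b * k (z b) y') x x =
      kernelMatrix k x x - kernelMatrix k x z * A * kernelMatrix k z x := by
  ext i j
  simp only [Matrix.sub_apply, mul_apply, kernelMatrix, of_apply, Finset.sum_mul]
  rw [Finset.sum_comm]

end KernelMatrix

namespace PosDefKernel

variable {𝒳 : Type*} {k : 𝒳 → 𝒳 → ℝ}

theorem of_posSemidef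
    (h : ∀ (m : ℕ) (x : Fin m → 𝒳), Function.Injective x → (kernelMatrix k x x).PosSemidef) :
    PosDefKernel k := fun m x hx α => by
  simpa [dotProduct_kernelMatrix_mulVec] using (h m x hx).dotProduct_mulVec_nonneg α

theorem posSemidef_kernelMatrix_of_injective (hk : PosDefKernel k)
    (hsym : ∀ x y, k x y = k y x) {m : ℕ} {x : Fin m → 𝒳} (hx : Function.Injective x) :
    (kernelMatrix k x x).PosSemidef :=
  .of_dotProduct_mulVec_nonneg (conjTranspose_kernelMatrix k hsym x x) fun α => by
    simpa [dotProduct_kernelMatrix_mulVec] using hk m x hx α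

/-- Repeated points are harmless: the kernel matrix of any finite family is a principal
submatrix (with repetitions) of the kernel matrix of an enumeration of its range. -/
theorem posSemidef_kernelMatrix (hk : PosDefKernel k) (hsym : ∀ x y, k x y = k y x)
    {ι : Type*} [Finite ι] (x : ι → 𝒳) : (kernelMatrix k x x).PosSemidef := by
  have := Fintype.ofFinite (Set.range x)
  let e := Fintype.equivFin (Set.range x)
  have hy : Function.Injective (Subtype.val ∘ e.symm) :=
    Subtype.val_injective.comp e.symm.injective
  have hx : x = (Subtype.val ∘ e.symm) ∘ (e ∘ Set.rangeFactorization x) := by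
    ext i; simp [Set.rangeFactorization]
  rw [hx]
  exact (hk.posSemidef_kernelMatrix_of_injective hsym hy).submatrix _

end PosDefKernel

theorem schur_complement_kernel_posDef_of_posDef_general
    {𝒳 : Type*} (k : 𝒳 → 𝒳 → ℝ)
    (hsym : ∀ x y, k x y = k y x)
    (hk : PosDefKernel k)
    (r : ℕ) (Xb : Fin r → 𝒳)
    (hKinv : IsUnit (Matrix.of fun a b => k (Xb a) (Xb b) : Matrix (Fin r) (Fin r) ℝ).det) :
    PosDefKernel (fun x x' =>
      k x x' - ∑ i, ∑ j,
        k x (Xb i) *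
          ((Matrix.of fun a b => k (Xb a) (Xb b) : Matrix (Fin r) (Fin r) ℝ)⁻¹ i j) *
          k (Xb j) x') := by
  refine PosDefKernel.of_posSemidef fun m x _ => ?_
  have hK : (kernelMatrix k Xb Xb).PosDef :=
    (hk.posSemidef_kernelMatrix hsym Xb).posDef_iff_isUnit.mpr
      ((isUnit_iff_isUnit_det _).mpr hKinv)
  let _ : Invertible (kernelMatrix k Xb Xb) := invertibleOfIsUnitDet _ hKinv
  have hblock := hk.posSemidef_kernelMatrix hsym (Sum.elim Xb x)
  rw [kernelMatrix_sumElim, ← conjTranspose_kernelMatrix k hsym Xb x,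
    PosDef.fromBlocks₁₁ _ _ hK, conjTranspose_kernelMatrix k hsym] at hblock
  rwa [kernelMatrix_sub_sum_sum]

/-- if `k` is positive-definite and `Xb = (x̄₁,…,x̄ᵣ)` is a tuple of
pairwise distinct points such that `K(Xb,Xb)` is invertible, then the Schur-complement
function `k_Schur(x,x') = k(x,x') − k(x,Xb)·K(Xb,Xb)⁻¹·k(Xb,x')` is a positive-definite
kernel. -/
theorem schur_complement_kernel_posDef_of_posDef
    {𝒳 : Type*} (k : 𝒳 → 𝒳 → ℝ)
    (hsym : ∀ x y, k x y = k y x)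
    (hk : PosDefKernel k)
    (r : ℕ) (Xb : Fin r → 𝒳) (hinj : Function.Injective Xb)
    (hKinv : IsUnit (Matrix.of fun a b => k (Xb a) (Xb b) : Matrix (Fin r) (Fin r) ℝ).det) :
    PosDefKernel (fun x x' =>
      k x x' - ∑ i, ∑ j,
        k x (Xb i) *
          ((Matrix.of fun a b => k (Xb a) (Xb b) : Matrix (Fin r) (Fin r) ℝ)⁻¹ i j) *
          k (Xb j) x') :=
  schur_complement_kernel_posDef_of_posDef_general k hsym hk r Xb hKinv
end

section
/- Let k be a positive-definite kernel on 𝒳, let {S_j}_{j∈J} be a partition of 𝒳 into pairwise disjoint nonempty subsets, and let X̄ = (x̄₁,…,x̄ᵣ) be a finite tuple of pairwise distinct points of 𝒳 with K(X̄,X̄) invertible. Define the compositional kernel k_comp(x,x') = k(x,x') if x and x' lie in the same cell S_j, and k_comp(x,x') = k(x,X̄)·K(X̄,X̄)⁻¹·k(X̄,x') otherwise. Then k_comp is a positive-definite kernel on 𝒳. -/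
open scoped BigOperators

/-- The Nyström kernel based on landmark points `Xb`:
`k_Nys(x,x') = k(x,Xb)·K(Xb,Xb)⁻¹·k(Xb,x')`. -/
noncomputable def nystromKernel {𝒳 : Type*} (k : 𝒳 → 𝒳 → ℝ) {r : ℕ} (Xb : Fin r → 𝒳)
    (x x' : 𝒳) : ℝ :=
  ∑ i, ∑ j, k x (Xb i) *
    ((Matrix.of fun a b => k (Xb a) (Xb b) : Matrix (Fin r) (Fin r) ℝ)⁻¹ i j) * k (Xb j) x'

open Classical in
/-- The compositional kernel: the original kernel `k` within a cell of the partition `S`,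
and the Nyström kernel based on the landmark points `Xb` across cells. -/
noncomputable def compositionalKernel {𝒳 J : Type*} (k : 𝒳 → 𝒳 → ℝ) (S : J → Set 𝒳)
    {r : ℕ} (Xb : Fin r → 𝒳) (x x' : 𝒳) : ℝ :=
  if ∃ j, x ∈ S j ∧ x' ∈ S j then k x x' else nystromKernel k Xb x x'


/-! Writing `c x` for the cell of `x`, `k_comp = k_Nys + [c x = c x'] • (k - k_Nys)`, so a
Gram matrix of `k_comp` is that of `k_Nys` plus the Hadamard product of that of `k - k_Nys`
with the block matrix `[c xᵢ = c xⱼ]`, a submatrix of the identity. The Gram matrix of `k_Nys`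
at `x` is `Bᴴ K(X̄,X̄)⁻¹ B` with `B = K(X̄,x)`, and that of `k - k_Nys` is the Schur complement
of `K(X̄,X̄)` in the Gram matrix of `k` at `(X̄, x)`; all these are positive semidefinite, and
the Schur product theorem concludes. -/

open Matrix Function

section

variable {𝒳 ι : Type*} {k : 𝒳 → 𝒳 → ℝ}

theorem star_dotProduct_submatrix_of_mulVec [Fintype ι] (x : ι → 𝒳) (α : ι → ℝ) :
    star α ⬝ᵥ ((of k).submatrix x x *ᵥ α) = ∑ i, ∑ j, α i * α j * k (x i) (x j) := by
  simp only [dotProduct, mulVec, submatrix_apply, of_apply, Finset.mul_sum, star_trivial]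
  exact Finset.sum_congr rfl fun i _ => Finset.sum_congr rfl fun j _ => by ring

theorem PosDefKernel.posSemidef_submatrix [Fintype ι] (hsym : ∀ x y, k x y = k y x)
    (hk : PosDefKernel k) (x : ι → 𝒳) : ((of k).submatrix x x).PosSemidef := by
  have of_injective {m : ℕ} {y : Fin m → 𝒳} (hy : Injective y) :
      ((of k).submatrix y y).PosSemidef := by
    refine .of_dotProduct_mulVec_nonneg (IsHermitian.ext fun i j => hsym _ _) fun α => ?_
    rw [star_dotProduct_submatrix_of_mulVec]
    exact hk m y hy α
  -- `PosDefKernel` only speaks of injective tuples: factor `x` through an enumeration of its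
  -- range
  let e := Finite.equivFin (Set.range x)
  have hx : x = (Subtype.val ∘ e.symm) ∘ (e ∘ Set.rangeFactorization x) := by
    ext i; simp only [Function.comp_apply, Equiv.symm_apply_apply, Set.rangeFactorization]
  rw [hx, ← submatrix_submatrix]
  exact (of_injective (Subtype.val_injective.comp e.symm.injective)).submatrix _

theorem posDefKernel_of_posSemidef_submatrix
    (h : ∀ (m : ℕ) (x : Fin m → 𝒳), ((of k).submatrix x x).PosSemidef) : PosDefKernel k := by
  intro m x _ α
  simpa only [star_dotProduct_submatrix_of_mulVec] using (h m x).dotProduct_mulVec_nonneg α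

section Nystrom

variable {r : ℕ} {Xb : Fin r → 𝒳}

theorem submatrix_of_nystromKernel (hsym : ∀ x y, k x y = k y x) (x : ι → 𝒳) :
    (of (nystromKernel k Xb)).submatrix x x =
      ((of k).submatrix Xb x)ᴴ * ((of k).submatrix Xb Xb)⁻¹ * (of k).submatrix Xb x := by
  ext i j
  simp only [submatrix_apply, of_apply, nystromKernel, mul_apply, conjTranspose_apply,
    star_trivial, Finset.sum_mul, hsym (Xb _) (x i)]
  exact Finset.sum_comm

theorem posSemidef_submatrix_of_nystromKernel [Fintype ι] (hsym : ∀ x y, k x y = k y x)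
    (hM : ((of k).submatrix Xb Xb).PosDef) (x : ι → 𝒳) :
    ((of (nystromKernel k Xb)).submatrix x x).PosSemidef := by
  rw [submatrix_of_nystromKernel hsym]
  exact hM.inv.posSemidef.conjTranspose_mul_mul_same _

theorem fromBlocks_submatrix_of (hsym : ∀ x y, k x y = k y x) {κ : Type*} (Y : κ → 𝒳)
    (x : ι → 𝒳) :
    (of k).submatrix (Sum.elim Y x) (Sum.elim Y x) =
      fromBlocks ((of k).submatrix Y Y) ((of k).submatrix Y x) ((of k).submatrix Y x)ᴴ
        ((of k).submatrix x x) := by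
  ext (a | a) (b | b) <;> simp [hsym]

theorem posSemidef_submatrix_sub_nystromKernel [Fintype ι] (hsym : ∀ x y, k x y = k y x)
    (hk : PosDefKernel k) (hM : ((of k).submatrix Xb Xb).PosDef) (x : ι → 𝒳) :
    ((of k).submatrix x x - (of (nystromKernel k Xb)).submatrix x x).PosSemidef := by
  have := hM.isUnit.invertible
  rw [submatrix_of_nystromKernel hsym, ← PosDef.fromBlocks₁₁ _ _ hM,
    ← fromBlocks_submatrix_of hsym]
  exact hk.posSemidef_submatrix hsym _

end Nystrom

theorem exists_mem_and_mem_iff_eq {J : Type*} {S : J → Set 𝒳} (hS : Pairwise (Disjoint on S))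
    {c : 𝒳 → J} (hc : ∀ x, x ∈ S (c x)) (x y : 𝒳) :
    (∃ j, x ∈ S j ∧ y ∈ S j) ↔ c x = c y := by
  refine ⟨fun ⟨j, hxj, hyj⟩ => ?_, fun h => ⟨c y, h ▸ hc x, hc y⟩⟩
  rw [hS.eq (Set.not_disjoint_iff.mpr ⟨x, hc x, hxj⟩),
    hS.eq (Set.not_disjoint_iff.mpr ⟨y, hc y, hyj⟩)]

open Classical in
theorem of_compositionalKernel {J : Type*} {S : J → Set 𝒳} (hS : Pairwise (Disjoint on S))
    {c : 𝒳 → J} (hc : ∀ x, x ∈ S (c x)) {r : ℕ} (Xb : Fin r → 𝒳) :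
    of (compositionalKernel k S Xb) = of (nystromKernel k Xb) +
      (of k - of (nystromKernel k Xb)) ⊙ (1 : Matrix J J ℝ).submatrix c c := by
  ext x y
  simp only [compositionalKernel, exists_mem_and_mem_iff_eq hS hc, of_apply, Matrix.add_apply,
    hadamard_apply, Matrix.sub_apply, submatrix_apply, one_apply]
  split_ifs <;> ring

end

theorem compositionalKernel_posDef_general
    {𝒳 J : Type*} (k : 𝒳 → 𝒳 → ℝ)
    (hsym : ∀ x y, k x y = k y x)
    (hk : PosDefKernel k)
    (S : J → Set 𝒳)
    (hSdisj : ∀ j j', j ≠ j' → Disjoint (S j) (S j'))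
    (hScover : (⋃ j, S j) = Set.univ)
    (r : ℕ) (Xb : Fin r → 𝒳)
    (hKinv : IsUnit (Matrix.of fun a b => k (Xb a) (Xb b) : Matrix (Fin r) (Fin r) ℝ).det) :
    PosDefKernel (compositionalKernel k S Xb) := by
  classical
  choose c hc using Set.iUnion_eq_univ_iff.mp hScover
  have hM : ((of k).submatrix Xb Xb).PosDef :=
    (hk.posSemidef_submatrix hsym Xb).posDef_iff_isUnit.mpr
      ((isUnit_iff_isUnit_det _).mpr hKinv)
  refine posDefKernel_of_posSemidef_submatrix fun m x => ?_
  rw [of_compositionalKernel hSdisj hc]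
  exact (posSemidef_submatrix_of_nystromKernel hsym hM x).add
    ((posSemidef_submatrix_sub_nystromKernel hsym hk hM x).hadamard (PosSemidef.one.submatrix _))

/-- if `k` is a positive-definite kernel, `S` is a partition of `𝒳` into pairwise
disjoint nonempty cells, and `Xb` is a tuple of pairwise distinct landmark points with
`K(Xb,Xb)` invertible, then the compositional kernel is positive-definite. -/
theorem compositionalKernel_posDef
    {𝒳 J : Type*} (k : 𝒳 → 𝒳 → ℝ)
    (hsym : ∀ x y, k x y = k y x)
    (hk : PosDefKernel k)
    (S : J → Set 𝒳)
    (hSne : ∀ j, (S j).Nonempty)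
    (hSdisj : ∀ j j', j ≠ j' → Disjoint (S j) (S j'))
    (hScover : (⋃ j, S j) = Set.univ)
    (r : ℕ) (Xb : Fin r → 𝒳) (hinj : Function.Injective Xb)
    (hKinv : IsUnit (Matrix.of fun a b => k (Xb a) (Xb b) : Matrix (Fin r) (Fin r) ℝ).det) :
    PosDefKernel (compositionalKernel k S Xb) :=
  compositionalKernel_posDef_general k hsym hk S hSdisj hScover r Xb hKinv
end

section
/- Let k be a strictly positive-definite kernel on 𝒳, let {S_j}_{j∈J} be a partition of 𝒳 into pairwise disjoint nonempty subsets, and let X̄ = (x̄₁,…,x̄ᵣ) be a finite tuple of pairwise distinct points of 𝒳 (so K(X̄,X̄) is invertible). Define the compositional kernel k_comp(x,x') = k(x,x') if x and x' lie in the same cell S_j, and k_comp(x,x') = k(x,X̄)·K(X̄,X̄)⁻¹·k(X̄,x') otherwise. Then k_comp is strictly positive-definite: for every finite list of pairwise distinct points x₁,…,xₘ ∈ 𝒳 and real α₁,…,αₘ not all zero, ∑_{i,j} αᵢ αⱼ k_comp(xᵢ,xⱼ) > 0. -/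
open scoped BigOperators

/-- A symmetric function `k` is a strictly positive-definite kernel if for every finite list of
pairwise distinct points `x₁,…,xₘ` and all real coefficients not all zero,
`∑ᵢⱼ αᵢ αⱼ k(xᵢ,xⱼ) > 0`. -/
def StrictPosDefKernel {𝒳 : Type*} (k : 𝒳 → 𝒳 → ℝ) : Prop :=
  ∀ (m : ℕ) (x : Fin m → 𝒳), Function.Injective x →
    ∀ α : Fin m → ℝ, α ≠ 0 → 0 < ∑ i, ∑ j, α i * α j * k (x i) (x j)

/-!
On the finitely many points involved, `k` is the Gram kernel `⟪φ x, φ y⟫` of linearly independent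
feature vectors, and the Nyström kernel is `⟪P (φ x), P (φ y)⟫` for the orthogonal projection `P`
onto the span of the landmark features. Splitting `⟪u, v⟫ = ⟪P u, P v⟫ + ⟪u - P u, v - P v⟫` turns
the quadratic form of the compositional kernel into `‖P v‖² + ∑_c ‖w_c - P w_c‖²`, where
`v = ∑ αᵢ • φ xᵢ` and `w_c` is the part of `v` coming from the cell `c`. If this vanishes, every
`w_c` lies in the landmark span, hence so does `v = ∑_c w_c`; then `v = P v = 0`, and `α = 0` by
linear independence.
-/

open Finset Matrix Submodule
open scoped InnerProductSpace MatrixOrder ComplexOrder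

section InnerProductSpace

variable {E : Type*} [NormedAddCommGroup E] [InnerProductSpace ℝ E]

theorem sum_sum_mul_inner_eq_norm_sq {ι : Type*} (s : Finset ι) (α : ι → ℝ) (u : ι → E) :
    ∑ i ∈ s, ∑ j ∈ s, α i * α j * ⟪u i, u j⟫_ℝ = ‖∑ i ∈ s, α i • u i‖ ^ 2 := by
  simp only [← real_inner_self_eq_norm_sq, sum_inner, inner_sum, real_inner_smul_left,
    real_inner_smul_right]
  exact sum_congr rfl fun i _ => sum_congr rfl fun j _ => by rw [real_inner_comm]; ring

theorem inner_eq_inner_starProjection_add (K : Submodule ℝ E) [K.HasOrthogonalProjection]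
    (u v : E) :
    ⟪u, v⟫_ℝ = ⟪K.starProjection u, K.starProjection v⟫_ℝ
      + ⟪u - K.starProjection u, v - K.starProjection v⟫_ℝ := by
  have hu := K.starProjection_inner_eq_zero u _ (K.starProjection_apply_mem v)
  have hv := K.starProjection_inner_eq_zero v _ (K.starProjection_apply_mem u)
  rw [real_inner_comm] at hv
  conv_lhs => rw [← add_sub_cancel (K.starProjection u) u, ← add_sub_cancel (K.starProjection v) v]
  rw [inner_add_left, inner_add_right, inner_add_right, hu, hv]
  ring

theorem sum_sum_ite_mul_inner_eq_sum_norm_sq {ι J : Type*} [Fintype ι] [DecidableEq J]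
    (g : ι → J) (α : ι → ℝ) (w : ι → E) :
    ∑ i, ∑ j, (if g i = g j then α i * α j * ⟪w i, w j⟫_ℝ else 0)
      = ∑ c ∈ univ.image g, ‖∑ i with g i = c, α i • w i‖ ^ 2 := by
  simp_rw [← sum_sum_mul_inner_eq_norm_sq]
  rw [← sum_fiberwise_of_maps_to (fun i _ => mem_image_of_mem g (mem_univ i))]
  refine sum_congr rfl fun c _ => sum_congr rfl fun i hi => ?_
  rw [sum_filter, (mem_filter.1 hi).2]
  simp_rw [eq_comm (b := c)]

theorem sum_sum_mul_ite_inner_starProjection_pos (K : Submodule ℝ E) [K.HasOrthogonalProjection]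
    {ι J : Type*} [Fintype ι] [DecidableEq J] {u : ι → E} (hu : LinearIndependent ℝ u) (g : ι → J)
    {α : ι → ℝ} (hα : α ≠ 0) :
    0 < ∑ i, ∑ j, α i * α j * (if g i = g j then ⟪u i, u j⟫_ℝ
      else ⟪K.starProjection (u i), K.starProjection (u j)⟫_ℝ) := by
  set P := K.starProjection
  set v := ∑ i, α i • u i
  set w := fun c => ∑ i with g i = c, α i • u i
  have hsplit : ∑ i, ∑ j, α i * α j * (if g i = g j then ⟪u i, u j⟫_ℝ
      else ⟪P (u i), P (u j)⟫_ℝ) = ‖P v‖ ^ 2 + ∑ c ∈ univ.image g, ‖w c - P (w c)‖ ^ 2 := by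
    have hterm : ∀ i j, α i * α j * (if g i = g j then ⟪u i, u j⟫_ℝ else ⟪P (u i), P (u j)⟫_ℝ)
        = α i * α j * ⟪P (u i), P (u j)⟫_ℝ + if g i = g j then
          α i * α j * ⟪u i - P (u i), u j - P (u j)⟫_ℝ else 0 := by
      intro i j
      split_ifs
      · rw [inner_eq_inner_starProjection_add K]; ring
      · ring
    simp_rw [hterm, sum_add_distrib, sum_sum_mul_inner_eq_norm_sq,
      sum_sum_ite_mul_inner_eq_sum_norm_sq]
    simp [v, w, P, map_sum, map_smul, smul_sub, sum_sub_distrib]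
  have hv : v ≠ 0 := fun h => hα (funext (Fintype.linearIndependent_iff.mp hu α h))
  have hvw : ∑ c ∈ univ.image g, w c = v :=
    sum_fiberwise_of_maps_to (fun i _ => mem_image_of_mem g (mem_univ i)) _
  rw [hsplit]
  by_cases hPv : P v = 0
  · obtain ⟨c, hc, hcK⟩ : ∃ c ∈ univ.image g, w c ∉ K := by
      by_contra! h
      exact hv ((starProjection_eq_self_iff.2 (hvw ▸ sum_mem h)).symm.trans hPv)
    have hwc : w c - P (w c) ≠ 0 := sub_ne_zero.2 fun h => hcK (starProjection_eq_self_iff.1 h.symm)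
    exact add_pos_of_nonneg_of_pos (sq_nonneg _)
      (sum_pos' (fun _ _ => sq_nonneg _) ⟨c, hc, by positivity⟩)
  · exact add_pos_of_pos_of_nonneg (by positivity) (sum_nonneg fun _ _ => sq_nonneg _)

theorem starProjection_span_range_eq_sum {ι : Type*} [Fintype ι] [DecidableEq ι] {ψ : ι → E}
    (hψ : LinearIndependent ℝ ψ) [(span ℝ (Set.range ψ)).HasOrthogonalProjection] (u : E) :
    (span ℝ (Set.range ψ)).starProjection u
      = ∑ i, ((gram ℝ ψ)⁻¹ *ᵥ fun j => ⟪ψ j, u⟫_ℝ) i • ψ i := by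
  set c := (gram ℝ ψ)⁻¹ *ᵥ fun j => ⟪ψ j, u⟫_ℝ
  have hc : gram ℝ ψ *ᵥ c = fun j => ⟪ψ j, u⟫_ℝ := by
    rw [mulVec_mulVec, mul_nonsing_inv _
      ((isUnit_iff_isUnit_det _).1 (posDef_gram_of_linearIndependent hψ).isUnit), one_mulVec]
  refine eq_starProjection_of_mem_of_inner_eq_zero
    (sum_mem fun i _ => smul_mem _ _ (subset_span (Set.mem_range_self i))) fun w hw => ?_
  refine (span_le (p := LinearMap.ker (innerₛₗ ℝ (u - ∑ i, c i • ψ i)))).2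
    (Set.range_subset_iff.2 fun l => ?_) hw
  have hl : ∑ i, ⟪ψ l, ψ i⟫_ℝ * c i = ⟪ψ l, u⟫_ℝ := congrFun hc l
  simp only [SetLike.mem_coe, LinearMap.mem_ker, innerₛₗ_apply_apply, inner_sub_left, sum_inner,
    real_inner_smul_left, sub_eq_zero]
  rw [real_inner_comm, ← hl]
  exact sum_congr rfl fun i _ => by rw [real_inner_comm, mul_comm]

theorem inner_starProjection_span_range_eq_sum {ι : Type*} [Fintype ι] [DecidableEq ι] {ψ : ι → E}
    (hψ : LinearIndependent ℝ ψ) [(span ℝ (Set.range ψ)).HasOrthogonalProjection] (u u' : E) :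
    ⟪(span ℝ (Set.range ψ)).starProjection u, (span ℝ (Set.range ψ)).starProjection u'⟫_ℝ
      = ∑ i, ∑ j, ⟪u, ψ i⟫_ℝ * (gram ℝ ψ)⁻¹ i j * ⟪ψ j, u'⟫_ℝ := by
  rw [inner_starProjection_left_eq_right,
    starProjection_eq_self_iff.2 (starProjection_apply_mem _ _),
    starProjection_span_range_eq_sum hψ, inner_sum]
  simp only [real_inner_smul_right, mulVec, dotProduct, sum_mul]
  exact sum_congr rfl fun i _ => sum_congr rfl fun j _ => by ring

end InnerProductSpace

theorem LinearIndepOn.linearIndependent_comp {R M α ι : Type*} [Semiring R] [AddCommMonoid M]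
    [Module R M] {φ : α → M} {s : Set α} (h : LinearIndepOn R φ s) {p : ι → α}
    (hp : Function.Injective p) (hps : ∀ i, p i ∈ s) : LinearIndependent R (φ ∘ p) :=
  h.comp (fun i => ⟨p i, hps i⟩) fun _ _ hij => hp (congrArg Subtype.val hij)

theorem Matrix.PosSemidef.exists_gram_eq {𝕜 n : Type*} [RCLike 𝕜] [Fintype n] [DecidableEq n]
    {G : Matrix n n 𝕜} (hG : G.PosSemidef) : ∃ φ : n → EuclideanSpace 𝕜 n, gram 𝕜 φ = G := by
  obtain ⟨X, rfl⟩ := CStarAlgebra.nonneg_iff_eq_star_mul_self.mp hG.nonneg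
  refine ⟨fun a => WithLp.toLp 2 fun c => X c a, ?_⟩
  ext a b
  simp [PiLp.inner_apply, Matrix.mul_apply, mul_comm]

namespace StrictPosDefKernel

variable {𝒳 : Type*} {k : 𝒳 → 𝒳 → ℝ}

theorem posDef_of_injective (hsym : ∀ x y, k x y = k y x) (hk : StrictPosDefKernel k)
    {ι : Type*} [Fintype ι] {p : ι → 𝒳} (hp : Function.Injective p) :
    (Matrix.of fun a b => k (p a) (p b)).PosDef := by
  let e := Fintype.equivFin ι
  have hFin : (Matrix.of fun i j => k (p (e.symm i)) (p (e.symm j))).PosDef := by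
    refine .of_dotProduct_mulVec_pos (Matrix.ext fun i j => hsym _ _) fun α hα => ?_
    refine (hk _ _ (hp.comp e.symm.injective) α hα).trans_eq ?_
    simp only [star_trivial, dotProduct, mulVec, of_apply, Function.comp_apply, mul_sum]
    exact sum_congr rfl fun i _ => sum_congr rfl fun j _ => by ring
  convert hFin.submatrix e.injective
  ext a b
  simp

theorem exists_featureMap (hsym : ∀ x y, k x y = k y x) (hk : StrictPosDefKernel k)
    (T : Finset 𝒳) : ∃ φ : 𝒳 → EuclideanSpace ℝ T,
      LinearIndepOn ℝ φ (T : Set 𝒳) ∧ ∀ x ∈ T, ∀ y ∈ T, ⟪φ x, φ y⟫_ℝ = k x y := by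
  classical
  have hG := hk.posDef_of_injective hsym (Subtype.val_injective (p := (· ∈ T)))
  obtain ⟨φ₀, hφ₀⟩ := hG.posSemidef.exists_gram_eq
  refine ⟨fun x => if h : x ∈ T then φ₀ ⟨x, h⟩ else 0, ?_, fun x hx y hy => ?_⟩
  · have : LinearIndependent ℝ φ₀ := linearIndependent_of_posDef_gram (hφ₀ ▸ hG)
    simpa [LinearIndepOn] using this
  · simpa [hx, hy] using congrFun₂ hφ₀ ⟨x, hx⟩ ⟨y, hy⟩

end StrictPosDefKernel

open scoped Function in
theorem exists_cell_eq_iff {𝒳 J : Type*} {S : J → Set 𝒳} (hdisj : Pairwise (Disjoint on S))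
    (hcover : ⋃ j, S j = Set.univ) :
    ∃ cell : 𝒳 → J, ∀ x y, cell x = cell y ↔ ∃ j, x ∈ S j ∧ y ∈ S j := by
  choose cell hcell using fun x => Set.mem_iUnion.1 (hcover.symm ▸ Set.mem_univ x)
  refine ⟨cell, fun x y => ⟨fun h => ⟨cell x, hcell x, h ▸ hcell y⟩, ?_⟩⟩
  rintro ⟨j, hx, hy⟩
  have hxj : cell x = j := hdisj.eq (Set.not_disjoint_iff.2 ⟨x, hcell x, hx⟩)
  have hyj : cell y = j := hdisj.eq (Set.not_disjoint_iff.2 ⟨y, hcell y, hy⟩)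
  rw [hxj, hyj]

section Kernels

variable {𝒳 E : Type*} [NormedAddCommGroup E] [InnerProductSpace ℝ E] {k : 𝒳 → 𝒳 → ℝ}
  {φ : 𝒳 → E} {s : Set 𝒳} {r : ℕ} {Xb : Fin r → 𝒳}

theorem nystromKernel_eq_inner_starProjection (hφ : ∀ x ∈ s, ∀ y ∈ s, ⟪φ x, φ y⟫_ℝ = k x y)
    (hXb : ∀ l, Xb l ∈ s) (hli : LinearIndependent ℝ (φ ∘ Xb))
    [(span ℝ (Set.range (φ ∘ Xb))).HasOrthogonalProjection] {x y : 𝒳} (hx : x ∈ s) (hy : y ∈ s) :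
    nystromKernel k Xb x y = ⟪(span ℝ (Set.range (φ ∘ Xb))).starProjection (φ x),
      (span ℝ (Set.range (φ ∘ Xb))).starProjection (φ y)⟫_ℝ := by
  have hgram : (Matrix.of fun a b => k (Xb a) (Xb b)) = gram ℝ (φ ∘ Xb) :=
    Matrix.ext fun a b => (hφ _ (hXb a) _ (hXb b)).symm
  rw [inner_starProjection_span_range_eq_sum hli, nystromKernel, hgram]
  simp only [Function.comp_apply, hφ _ hx _ (hXb _), hφ _ (hXb _) _ hy]

theorem compositionalKernel_eq_ite_inner {J : Type*} [DecidableEq J] {S : J → Set 𝒳}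
    {cell : 𝒳 → J} (hcell : ∀ x y, cell x = cell y ↔ ∃ j, x ∈ S j ∧ y ∈ S j)
    (hφ : ∀ x ∈ s, ∀ y ∈ s, ⟪φ x, φ y⟫_ℝ = k x y)
    (hXb : ∀ l, Xb l ∈ s) (hli : LinearIndependent ℝ (φ ∘ Xb))
    [(span ℝ (Set.range (φ ∘ Xb))).HasOrthogonalProjection] {x y : 𝒳} (hx : x ∈ s) (hy : y ∈ s) :
    compositionalKernel k S Xb x y = if cell x = cell y then ⟪φ x, φ y⟫_ℝ
      else ⟪(span ℝ (Set.range (φ ∘ Xb))).starProjection (φ x),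
        (span ℝ (Set.range (φ ∘ Xb))).starProjection (φ y)⟫_ℝ := by
  rw [compositionalKernel, ← nystromKernel_eq_inner_starProjection hφ hXb hli hx hy,
    hφ _ hx _ hy]
  classical
  exact if_congr (hcell x y).symm rfl rfl

end Kernels

theorem compositionalKernel_strictPosDef_general
    {𝒳 J : Type*} (k : 𝒳 → 𝒳 → ℝ)
    (hsym : ∀ x y, k x y = k y x)
    (hk : StrictPosDefKernel k)
    (S : J → Set 𝒳)
    (hSdisj : ∀ j j', j ≠ j' → Disjoint (S j) (S j'))
    (hScover : (⋃ j, S j) = Set.univ)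
    (r : ℕ) (Xb : Fin r → 𝒳) (hinj : Function.Injective Xb) :
    StrictPosDefKernel (compositionalKernel k S Xb) := by
  classical
  intro m x hx α hα
  obtain ⟨cell, hcell⟩ := exists_cell_eq_iff hSdisj hScover
  let T : Finset 𝒳 := univ.image x ∪ univ.image Xb
  have hxT : ∀ i, x i ∈ T := fun i => mem_union_left _ (mem_image_of_mem _ (mem_univ i))
  have hXbT : ∀ l, Xb l ∈ T := fun l => mem_union_right _ (mem_image_of_mem _ (mem_univ l))
  obtain ⟨φ, hφli, hφ⟩ := hk.exists_featureMap hsym T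
  simp_rw [compositionalKernel_eq_ite_inner hcell hφ hXbT
    (hφli.linearIndependent_comp hinj hXbT) (hxT _) (hxT _)]
  exact sum_sum_mul_ite_inner_starProjection_pos _ (hφli.linearIndependent_comp hx hxT)
    (cell ∘ x) hα

/-- if `k` is a strictly positive-definite kernel, `S` is a partition of `𝒳` into
pairwise disjoint nonempty cells, and `Xb` is a tuple of pairwise distinct landmark points,
then the compositional kernel is strictly positive-definite. -/
theorem compositionalKernel_strictPosDef
    {𝒳 J : Type*} (k : 𝒳 → 𝒳 → ℝ)
    (hsym : ∀ x y, k x y = k y x)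
    (hk : StrictPosDefKernel k)
    (S : J → Set 𝒳)
    (hSne : ∀ j, (S j).Nonempty)
    (hSdisj : ∀ j j', j ≠ j' → Disjoint (S j) (S j'))
    (hScover : (⋃ j, S j) = Set.univ)
    (r : ℕ) (Xb : Fin r → 𝒳) (hinj : Function.Injective Xb) :
    StrictPosDefKernel (compositionalKernel k S Xb) :=
  compositionalKernel_strictPosDef_general k hsym hk S hSdisj hScover r Xb hinj
end

section
/- Let A be an n×n real symmetric positive-definite matrix and let π be an equivalence relation (partition) on the index set {1,…,n}. Let D be the block-diagonal part of A with respect to π, i.e. D_{ij} = A_{ij} if i and j lie in the same cell of π and D_{ij} = 0 otherwise. Then the spectral norm satisfies ‖A − D‖₂ < ‖A‖₂. -/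
/-!
For a unit vector `x`, both `xᵀAx` and `xᵀDx` lie in `(0, ‖A‖₂]`: the first because `A` is positive
definite, the second because `xᵀDx = ∑ₖ xₖᵀAxₖ`, where `xₖ` is the restriction of `x` to the `k`-th
cell, and `∑ₖ ‖xₖ‖² = 1`. Hence `|xᵀ(A - D)x| < ‖A‖₂`, and since `A - D` is symmetric its
spectral norm is `|xᵀ(A - D)x|` for a suitable unit vector `x`, found by compactness of the sphere.
-/

open scoped BigOperators

/-- The spectral norm (operator 2-norm) of a real matrix: the operator norm of the associated
linear map between Euclidean spaces, i.e. the largest singular value. -/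
noncomputable def matSpectralNorm {n : ℕ} (M : Matrix (Fin n) (Fin n) ℝ) : ℝ :=
  ‖LinearMap.toContinuousLinearMap (Matrix.toEuclideanLin M)‖

open Matrix RCLike WithLp
open scoped RealInnerProductSpace

namespace ContinuousLinearMap

variable {𝕜 E : Type*} [RCLike 𝕜] [NormedAddCommGroup E] [InnerProductSpace 𝕜 E]

theorem exists_norm_eq_abs_re_inner_self [FiniteDimensional 𝕜 E] [Nontrivial E] (T : E →L[𝕜] E)
    (hT : (T : E →ₗ[𝕜] E).IsSymmetric) : ∃ x, ‖x‖ = 1 ∧ ‖T‖ = |re (inner 𝕜 (T x) x)| := by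
  have := FiniteDimensional.proper_rclike 𝕜 E
  have hsphere : (Metric.sphere (0 : E) 1).Nonempty := by
    obtain ⟨x, hx⟩ := exists_ne (0 : E)
    exact ⟨_, by simpa using norm_smul_inv_norm (𝕜 := 𝕜) hx⟩
  obtain ⟨x₀, hx₀, hmax⟩ := (isCompact_sphere (0 : E) 1).exists_isMaxOn hsphere
    T.reApplyInnerSelf_continuous.abs.continuousOn
  have hx₀ : ‖x₀‖ = 1 := by simpa using hx₀
  refine ⟨x₀, hx₀, le_antisymm ?_ ?_⟩
  · rw [T.norm_eq_iSup_rayleighQuotient hT]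
    refine ciSup_le fun x => ?_
    rcases eq_or_ne x 0 with rfl | hx
    · simp
    obtain ⟨y, hy, hyx⟩ : rayleighQuotient T x ∈ rayleighQuotient T '' Metric.sphere 0 1 := by
      rw [← T.image_rayleigh_eq_image_rayleigh_sphere one_pos]
      exact ⟨x, hx, rfl⟩
    have hy1 : ‖y‖ = 1 := by simpa using hy
    rw [← hyx, rayleighQuotient, hy1, one_pow, div_one]
    exact hmax hy
  · simpa [rayleighQuotient, reApplyInnerSelf_apply, hx₀] using T.rayleighQuotient_le_norm x₀

end ContinuousLinearMap

namespace Matrix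

variable {ι κ R : Type*} [DecidableEq κ]

def blockDiagPart [Zero R] (f : ι → κ) (A : Matrix ι ι R) : Matrix ι ι R :=
  of fun i j => if f i = f j then A i j else 0

@[simp]
theorem blockDiagPart_apply [Zero R] (f : ι → κ) (A : Matrix ι ι R) (i j : ι) :
    blockDiagPart f A i j = if f i = f j then A i j else 0 := rfl

theorem blockDiagPart_one [DecidableEq ι] [Zero R] [One R] (f : ι → κ) :
    blockDiagPart f (1 : Matrix ι ι R) = 1 := by
  ext i j
  by_cases h : i = j <;> simp [one_apply, h]

theorem IsHermitian.blockDiagPart [AddMonoid R] [StarAddMonoid R] {A : Matrix ι ι R}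
    (hA : A.IsHermitian) (f : ι → κ) : (blockDiagPart f A).IsHermitian := by
  ext i j
  simp [eq_comm, ← hA.apply i j, apply_ite star]

variable [Fintype ι] [Fintype κ]

theorem dotProduct_blockDiagPart_mulVec [NonUnitalNonAssocSemiring R] (f : ι → κ)
    (A : Matrix ι ι R) (u v : ι → R) :
    u ⬝ᵥ blockDiagPart f A *ᵥ v =
      ∑ k, (fun i => if f i = k then u i else 0) ⬝ᵥ A *ᵥ fun j => if f j = k then v j else 0 := by
  simp only [dotProduct, mulVec, blockDiagPart_apply, Finset.mul_sum]
  symm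
  rw [Finset.sum_comm]
  refine Finset.sum_congr rfl fun i _ => ?_
  rw [Finset.sum_comm]
  refine Finset.sum_congr rfl fun j _ => ?_
  simp [ite_mul, mul_ite, eq_comm]

theorem sum_dotProduct_fiber_self [DecidableEq ι] [NonAssocSemiring R] (f : ι → κ) (v : ι → R) :
    ∑ k, (fun i => if f i = k then v i else 0) ⬝ᵥ (fun i => if f i = k then v i else 0) =
      v ⬝ᵥ v := by
  simpa [blockDiagPart_one] using (dotProduct_blockDiagPart_mulVec f 1 v v).symm

theorem PosDef.blockDiagPart [Ring R] [PartialOrder R] [StarRing R] [StarOrderedRing R]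
    {A : Matrix ι ι R} (hA : A.PosDef) (f : ι → κ) : (blockDiagPart f A).PosDef := by
  refine posDef_iff_dotProduct_mulVec.2 ⟨hA.isHermitian.blockDiagPart f, fun v hv => ?_⟩
  obtain ⟨i, hi⟩ := Function.ne_iff.1 hv
  have hstar (k : κ) : (fun j => if f j = k then (star v) j else 0) =
      star fun j => if f j = k then v j else 0 := by
    ext j
    simp [apply_ite star]
  rw [dotProduct_blockDiagPart_mulVec]
  simp_rw [hstar]
  refine Finset.sum_pos' (fun k _ => hA.posSemidef.dotProduct_mulVec_nonneg _)
    ⟨f i, Finset.mem_univ _, hA.dotProduct_mulVec_pos fun h => hi ?_⟩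
  simpa using congrFun h i

theorem inner_toEuclideanLin_self [DecidableEq ι] (M : Matrix ι ι ℝ) (x : EuclideanSpace ℝ ι) :
    ⟪toEuclideanLin M x, x⟫ = ofLp x ⬝ᵥ M *ᵥ ofLp x :=
  rfl

end Matrix

theorem EuclideanSpace.real_norm_sq_eq_dotProduct {ι : Type*} [Fintype ι]
    (x : EuclideanSpace ℝ ι) : ‖x‖ ^ 2 = ofLp x ⬝ᵥ ofLp x :=
  (real_inner_self_eq_norm_sq x).symm

theorem dotProduct_mulVec_le_matSpectralNorm {n : ℕ} (M : Matrix (Fin n) (Fin n) ℝ)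
    (v : Fin n → ℝ) : v ⬝ᵥ M *ᵥ v ≤ matSpectralNorm M * (v ⬝ᵥ v) := by
  set T := LinearMap.toContinuousLinearMap (toEuclideanLin M)
  set x : EuclideanSpace ℝ (Fin n) := toLp 2 v
  calc v ⬝ᵥ M *ᵥ v = ⟪T x, x⟫ := (inner_toEuclideanLin_self M x).symm
    _ ≤ ‖T x‖ * ‖x‖ := real_inner_le_norm _ _
    _ ≤ ‖T‖ * ‖x‖ * ‖x‖ := by gcongr; exact T.le_opNorm x
    _ = matSpectralNorm M * (v ⬝ᵥ v) := by
      rw [mul_assoc, ← sq, EuclideanSpace.real_norm_sq_eq_dotProduct]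
      rfl

theorem dotProduct_blockDiagPart_mulVec_le_matSpectralNorm {n : ℕ} {κ : Type*} [Fintype κ]
    [DecidableEq κ] (f : Fin n → κ) (A : Matrix (Fin n) (Fin n) ℝ) (v : Fin n → ℝ) :
    v ⬝ᵥ blockDiagPart f A *ᵥ v ≤ matSpectralNorm A * (v ⬝ᵥ v) := by
  rw [dotProduct_blockDiagPart_mulVec, ← sum_dotProduct_fiber_self f v, Finset.mul_sum]
  exact Finset.sum_le_sum fun k _ => dotProduct_mulVec_le_matSpectralNorm A _

open Classical in
/-- if `A` is an `n×n` real symmetric positive-definite matrix and `D` is the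
block-diagonal part of `A` with respect to an equivalence relation `π` on the index set,
then `‖A − D‖₂ < ‖A‖₂`. -/
theorem spectralNorm_sub_blockDiag_lt
    {n : ℕ} (hn : 0 < n) (A : Matrix (Fin n) (Fin n) ℝ) (hA : A.PosDef)
    (π : Fin n → Fin n → Prop) (hπ : Equivalence π) :
    matSpectralNorm (A - Matrix.of fun i j => if π i j then A i j else 0) <
      matSpectralNorm A := by
  let s : Setoid (Fin n) := ⟨π, hπ⟩
  have hD : (Matrix.of fun i j => if π i j then A i j else 0) =
      blockDiagPart (Quotient.mk s) A := by
    ext i j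
    exact if_congr (Quotient.eq (r := s)).symm rfl rfl
  have : Nonempty (Fin n) := ⟨⟨0, hn⟩⟩
  obtain ⟨x, hx, hnorm⟩ := (LinearMap.toContinuousLinearMap
    (toEuclideanLin (A - blockDiagPart (Quotient.mk s) A))).exists_norm_eq_abs_re_inner_self
    (isSymmetric_toEuclideanLin_iff.2 (hA.isHermitian.sub (hA.isHermitian.blockDiagPart _)))
  have hv : ofLp x ⬝ᵥ ofLp x = 1 := by
    rw [← EuclideanSpace.real_norm_sq_eq_dotProduct, hx, one_pow]
  have hv0 : ofLp x ≠ 0 := fun h => by simp [h] at hv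
  have hApos := hA.dotProduct_mulVec_pos hv0
  have hDpos := (hA.blockDiagPart (Quotient.mk s)).dotProduct_mulVec_pos hv0
  have hAle := dotProduct_mulVec_le_matSpectralNorm A (ofLp x)
  have hDle := dotProduct_blockDiagPart_mulVec_le_matSpectralNorm (Quotient.mk s) A (ofLp x)
  simp only [star_trivial, hv, mul_one] at hApos hDpos hAle hDle
  rw [hD, matSpectralNorm, hnorm, re_to_real, LinearMap.coe_toContinuousLinearMap',
    inner_toEuclideanLin_self, sub_mulVec, dotProduct_sub, abs_sub_lt_iff]
  constructor <;> linarith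
end
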